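/- arXiv:2007.06170 — 2 statements merged into one kernel-verified Lean document; each statement's English description precedes it below -/
import Mathlib

section
/- With the renormalised null coordinate ūsʳ = r₀·log((ūs + r₀)/r₀), the acceleration coefficient transforms as 2ωʳ = 1/r₀ + 2ω·(ūs + r₀)/r₀; substituting ω = -(1/(2r) + 1/(2r₀))·(s/r)·exp((s+r₀)/r₀)·exp(-r/r₀) and the defining relation (r - r₀) exp(r/r₀) = (ūs + r₀)(s/r₀) exp((s + r₀)/r₀) yields ωʳ = r₀/(2r²). -/
open Real

/-! The defining relation says exactly that `(ūs + r₀) · s · exp((s + r₀)/r₀) · exp(-r/r₀)`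
equals `r₀ (r - r₀)`, so all exponentials drop out of `ω (ūs + r₀)`, which becomes
`(r₀² - r²)/(2r²)`; then `2ωʳ = 1/r₀ + (r₀² - r²)/(r₀ r²) = r₀/r²`. -/

lemma mul_mul_exp_mul_exp_neg_eq_of_rel {r₀ r s u : ℝ} (hr₀ : r₀ ≠ 0)
    (hrel : (r - r₀) * exp (r / r₀) = u * (s / r₀) * exp ((s + r₀) / r₀)) :
    u * s * exp ((s + r₀) / r₀) * exp (-r / r₀) = r₀ * (r - r₀) := by
  have hexp : exp (r / r₀) * exp (-r / r₀) = 1 := by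
    rw [← exp_add, neg_div, add_neg_cancel, exp_zero]
  calc u * s * exp ((s + r₀) / r₀) * exp (-r / r₀)
      = r₀ * (u * (s / r₀) * exp ((s + r₀) / r₀)) * exp (-r / r₀) := by field_simp
    _ = r₀ * (r - r₀) * (exp (r / r₀) * exp (-r / r₀)) := by rw [← hrel]; ring
    _ = r₀ * (r - r₀) := by rw [hexp, mul_one]

lemma acceleration_mul_eq_of_rel {r₀ r s u : ℝ} (hr₀ : r₀ ≠ 0) (hr : r ≠ 0)
    (hrel : (r - r₀) * exp (r / r₀) = u * (s / r₀) * exp ((s + r₀) / r₀)) :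
    -(1 / (2 * r) + 1 / (2 * r₀)) * (s / r) * exp ((s + r₀) / r₀) * exp (-r / r₀) * u
      = (r₀ ^ 2 - r ^ 2) / (2 * r ^ 2) := by
  calc -(1 / (2 * r) + 1 / (2 * r₀)) * (s / r) * exp ((s + r₀) / r₀) * exp (-r / r₀) * u
      = -(1 / (2 * r) + 1 / (2 * r₀)) / r * (u * s * exp ((s + r₀) / r₀) * exp (-r / r₀)) := by
        ring
    _ = (r₀ ^ 2 - r ^ 2) / (2 * r ^ 2) := by
        rw [mul_mul_exp_mul_exp_neg_eq_of_rel hr₀ hrel]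
        field_simp
        ring

theorem stmt4_general (r₀ r s us ω ωr : ℝ) (hr₀ : 0 < r₀) (hr : r ≠ 0)
    (hrel : (r - r₀) * Real.exp (r / r₀)
      = (us + r₀) * (s / r₀) * Real.exp ((s + r₀) / r₀))
    (hω : ω = -(1 / (2 * r) + 1 / (2 * r₀)) * (s / r)
      * Real.exp ((s + r₀) / r₀) * Real.exp (-r / r₀))
    (hωr : 2 * ωr = 1 / r₀ + 2 * ω * (us + r₀) / r₀) :
    ωr = r₀ / (2 * r ^ 2) := by
  have hωu : ω * (us + r₀) = (r₀ ^ 2 - r ^ 2) / (2 * r ^ 2) := by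
    rw [hω]; exact acceleration_mul_eq_of_rel hr₀.ne' hr hrel
  have h2ωr : 2 * ωr = r₀ / r ^ 2 := by
    rw [hωr, mul_assoc, hωu]
    field_simp
    ring
  linear_combination h2ωr / 2

/-- With the renormalised null coordinate `ūsʳ = r₀·log((ūs+r₀)/r₀)`,
the acceleration coefficient transforms as `2ωʳ = 1/r₀ + 2ω·(ūs+r₀)/r₀`; substituting
`ω = -(1/(2r) + 1/(2r₀))·(s/r)·exp((s+r₀)/r₀)·exp(-r/r₀)` and the defining relation
`(r-r₀)·exp(r/r₀) = (ūs+r₀)·(s/r₀)·exp((s+r₀)/r₀)` yields `ωʳ = r₀/(2r²)`. -/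
theorem stmt4 (r₀ r s us ω ωr : ℝ) (hr₀ : 0 < r₀) (hr : r ≠ 0)
    (hs : s ≠ 0) (hus : us + r₀ ≠ 0)
    (hrel : (r - r₀) * Real.exp (r / r₀)
      = (us + r₀) * (s / r₀) * Real.exp ((s + r₀) / r₀))
    (hω : ω = -(1 / (2 * r) + 1 / (2 * r₀)) * (s / r)
      * Real.exp ((s + r₀) / r₀) * Real.exp (-r / r₀))
    (hωr : 2 * ωr = 1 / r₀ + 2 * ω * (us + r₀) / r₀) :
    ωr = r₀ / (2 * r ^ 2) :=
  stmt4_general r₀ r s us ω ωr hr₀ hr hrel hω hωr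
end

section
/- Let ξ be a smooth 1-form on the unit round sphere (S², γ̊) and R₁, R₂, R₃ the rotation vector fields. Then Σᵢ₌₁³ |L_{Rᵢ} ξ|²_γ̊ = |∇̊ξ|²_γ̊ + |ξ|²_γ̊, where L denotes the Lie derivative and ∇̊ the Levi-Civita connection of γ̊. -/
/-!
**Statement 8.** For a smooth 1-form `ξ` on the round unit sphere `(S², γ̊)` and the
rotation (Killing) fields `R₁, R₂, R₃`:  `∑ᵢ |L_{Rᵢ} ξ|²_γ̊ = |∇̊ξ|²_γ̊ + |ξ|²_γ̊`.

Extrinsic formalization: since the `Rᵢ` are Killing fields, under the metric identification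
of 1-forms with tangent vector fields `X = ξ♯` one has `(L_{Rᵢ}ξ)♯ = [Rᵢ, X]`, and all the
pointwise norms are preserved.  The bracket at `x` is
`[Rᵢ, X](x) = DX(x)(eᵢ×x) - eᵢ×X(x)`, the covariant derivative is
`∇̊_v X = P_x (D(P X)(x)(P_x v))`, and `|∇̊X|² = ∑ᵢ ‖∇̊_{P eᵢ}X‖²`.  Both sides depend only
on the restriction of the tangential field `X` to the sphere.
-/

noncomputable section
open scoped RealInnerProductSpace

abbrev E3 := EuclideanSpace ℝ (Fin 3)

def eb (i : Fin 3) : E3 := EuclideanSpace.single i 1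

def cross3 (a b : E3) : E3 :=
  (EuclideanSpace.equiv (Fin 3) ℝ).symm
    ![a 1 * b 2 - a 2 * b 1, a 2 * b 0 - a 0 * b 2, a 0 * b 1 - a 1 * b 0]

def rotF (i : Fin 3) (x : E3) : E3 := cross3 (eb i) x

def tproj (x v : E3) : E3 := v - (⟪x, v⟫ / ⟪x, x⟫) • x

/-- covariant derivative `∇̊_v X` on the sphere (extrinsic) -/
def covDV (X : E3 → E3) (x v : E3) : E3 :=
  tproj x (fderiv ℝ (fun y => tproj y (X y)) x (tproj x v))


/-!
Let `P = tproj x` be the orthogonal projection onto the tangent plane `x^⊥` and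
`∇̊X = P ∘ DX(x) ∘ P` (`covDV` differentiates `y ↦ P_y X(y)` instead, but the extra term
`-D(⟪y, X y⟫ / ⟪y, y⟫) • x` is normal at `x`, so `P` kills it). Each bracket
`DX(x)(eᵢ × x) - eᵢ × X(x)` is tangent to the sphere (differentiate `⟪X y, y⟫ = 0` along the
great circle through `x` with velocity `eᵢ × x`), so it has the norm of its tangential part
`∇̊X(eᵢ × x) - P(eᵢ × X)`. The contraction `∑ᵢ (eᵢ × v)ⱼ (eᵢ × w)ₖ = δⱼₖ ⟪v, w⟫ - wⱼ vₖ` gives,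
for linear maps `C`, `D`, `∑ᵢ ⟪C(eᵢ × v), D(eᵢ × w)⟫ = ⟪v, w⟫ ∑ᵢ ⟪C eᵢ, D eᵢ⟫ - ⟪C w, D v⟫`.
Expanding the square and using `∇̊X x = 0`, `P x = 0`, `P X = X`, `⟪x, X⟫ = 0` and `tr P = 2`,
the three terms are `|∇̊X|²`, `0` and `|X|²`.
-/

lemma inner_eq_sum_three (a b : E3) : ⟪a, b⟫ = a 0 * b 0 + a 1 * b 1 + a 2 * b 2 := by
  simp only [PiLp.inner_apply, Fin.sum_univ_three, RCLike.inner_apply, conj_trivial]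
  ring

lemma cross3_apply_zero (a b : E3) : cross3 a b 0 = a 1 * b 2 - a 2 * b 1 := rfl
lemma cross3_apply_one (a b : E3) : cross3 a b 1 = a 2 * b 0 - a 0 * b 2 := rfl
lemma cross3_apply_two (a b : E3) : cross3 a b 2 = a 0 * b 1 - a 1 * b 0 := rfl

lemma eb_apply (i j : Fin 3) : eb i j = if j = i then 1 else 0 := by
  simp [eb]

lemma inner_cross3_self_right (a b : E3) : ⟪b, cross3 a b⟫ = 0 := by
  simp only [inner_eq_sum_three, cross3_apply_zero, cross3_apply_one, cross3_apply_two]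
  ring

lemma inner_cross3_right_swap (a b c : E3) : ⟪c, cross3 a b⟫ = -⟪b, cross3 a c⟫ := by
  simp only [inner_eq_sum_three, cross3_apply_zero, cross3_apply_one, cross3_apply_two]
  ring

lemma map_eq_sum_smul_map_eb {F : Type*} [AddCommGroup F] [Module ℝ F] (C : E3 →ₗ[ℝ] F)
    (u : E3) : C u = ∑ j, u j • C (eb j) := by
  conv_lhs => rw [← (EuclideanSpace.basisFun (Fin 3) ℝ).sum_repr u]
  simp [eb, map_sum, map_smul]

lemma sum_inner_map_cross3 {F : Type*} [NormedAddCommGroup F] [InnerProductSpace ℝ F]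
    (C D : E3 →ₗ[ℝ] F) (v w : E3) :
    ∑ i, ⟪C (cross3 (eb i) v), D (cross3 (eb i) w)⟫
      = ⟪v, w⟫ * ∑ i, ⟪C (eb i), D (eb i)⟫ - ⟪C w, D v⟫ := by
  obtain ⟨c, hc⟩ : ∃ c : Fin 3 → F, ∀ u, C u = ∑ j, u j • c j := ⟨_, map_eq_sum_smul_map_eb C⟩
  obtain ⟨d, hd⟩ : ∃ d : Fin 3 → F, ∀ u, D u = ∑ j, u j • d j := ⟨_, map_eq_sum_smul_map_eb D⟩
  simp only [hc, hd, Fin.sum_univ_three, inner_eq_sum_three, cross3_apply_zero, cross3_apply_one,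
    cross3_apply_two, eb_apply]
  simp only [Fin.reduceEq, if_true, if_false, inner_add_left, inner_add_right, real_inner_smul_left,
    real_inner_smul_right]
  ring

lemma sum_norm_map_cross3_sq {F : Type*} [NormedAddCommGroup F] [InnerProductSpace ℝ F]
    (C : E3 →ₗ[ℝ] F) (v : E3) :
    ∑ i, ‖C (cross3 (eb i) v)‖ ^ 2 = ‖v‖ ^ 2 * ∑ i, ‖C (eb i)‖ ^ 2 - ‖C v‖ ^ 2 := by
  simpa only [real_inner_self_eq_norm_sq] using sum_inner_map_cross3 C C v v

def tprojLinear (x : E3) : E3 →ₗ[ℝ] E3 where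
  toFun := tproj x
  map_add' u v := by simp only [tproj, inner_add_right, add_div, add_smul]; abel
  map_smul' c v := by simp only [tproj, inner_smul_right, mul_div_assoc, smul_sub, smul_smul,
    RingHom.id_apply]

@[simp] lemma tprojLinear_apply (x v : E3) : tprojLinear x v = tproj x v := rfl

lemma tproj_of_inner_eq_zero {x v : E3} (h : ⟪x, v⟫ = 0) : tproj x v = v := by
  simp [tproj, h]

lemma tproj_self (x : E3) : tproj x x = 0 := by
  by_cases hx : x = 0
  · simp [tproj, hx]
  · have : ‖x‖ ^ 2 ≠ 0 := by positivity
    simp [tproj, this]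

lemma tproj_sub_smul_self (x v : E3) (s : ℝ) : tproj x (v - s • x) = tproj x v := by
  simpa [tproj_self] using (tprojLinear x).map_sub v (s • x)

lemma norm_sq_eq_norm_tproj_sq_add_inner_sq {x : E3} (hx : ‖x‖ = 1) (v : E3) :
    ‖v‖ ^ 2 = ‖tproj x v‖ ^ 2 + ⟪x, v⟫ ^ 2 := by
  rw [tproj, real_inner_self_eq_norm_sq, hx, norm_sub_sq_real, norm_smul, real_inner_smul_right,
    hx, real_inner_comm]
  simp only [one_pow, div_one, Real.norm_eq_abs, mul_one, sq_abs]
  ring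

lemma sum_norm_tproj_eb_sq {x : E3} (hx : ‖x‖ = 1) : ∑ i, ‖tproj x (eb i)‖ ^ 2 = 2 := by
  have h (i : Fin 3) : ‖tproj x (eb i)‖ ^ 2 = 1 - x i ^ 2 := by
    have := norm_sq_eq_norm_tproj_sq_add_inner_sq hx (eb i)
    rw [show ‖eb i‖ = 1 by simp [eb], show ⟪x, eb i⟫ = x i by
      simp [eb, EuclideanSpace.inner_single_right]] at this
    linarith
  rw [Finset.sum_congr rfl fun i _ => h i, Finset.sum_sub_distrib, ← EuclideanSpace.real_norm_sq_eq,
    hx]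
  norm_num

def covDerivLinear (X : E3 → E3) (x : E3) : E3 →ₗ[ℝ] E3 :=
  tprojLinear x ∘ₗ (fderiv ℝ X x).toLinearMap ∘ₗ tprojLinear x

lemma covDerivLinear_apply (X : E3 → E3) (x v : E3) :
    covDerivLinear X x v = tproj x (fderiv ℝ X x (tproj x v)) := rfl

lemma covDerivLinear_self (X : E3 → E3) (x : E3) : covDerivLinear X x x = 0 := by
  change tprojLinear x (fderiv ℝ X x (tprojLinear x x)) = 0
  rw [tprojLinear_apply x x, tproj_self, map_zero, map_zero]

lemma covDV_eq_covDerivLinear {X : E3 → E3} {x : E3} (hX : DifferentiableAt ℝ X x)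
    (hx : x ≠ 0) (hXx : ⟪x, X x⟫ = 0) (v : E3) : covDV X x v = covDerivLinear X x v := by
  set q : E3 → ℝ := fun y => ⟪y, X y⟫ / ⟪y, y⟫
  have hq : DifferentiableAt ℝ q x := by
    simp only [q, div_eq_mul_inv]
    exact (differentiableAt_id.inner ℝ hX).mul
      ((differentiableAt_id.inner ℝ differentiableAt_id).inv (inner_self_ne_zero.mpr hx))
  have hderiv (w : E3) :
      fderiv ℝ (fun y => tproj y (X y)) x w = fderiv ℝ X x w - fderiv ℝ q x w • x := by
    change fderiv ℝ (fun y => X y - q y • y) x w = _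
    rw [fderiv_fun_sub hX (by fun_prop), fderiv_fun_smul hq differentiableAt_id (f := fun y => y)]
    simp [q, hXx]
  rw [covDV, hderiv, tproj_sub_smul_self, covDerivLinear_apply]

section Sphere

variable {E : Type*} [NormedAddCommGroup E] [InnerProductSpace ℝ E]

lemma norm_cos_smul_add_sin_smul {x u : E} (hx : ‖x‖ = 1) (hu : ‖u‖ = 1) (hxu : ⟪x, u⟫ = 0)
    (t : ℝ) : ‖Real.cos t • x + Real.sin t • u‖ = 1 := by
  rw [← pow_eq_one_iff_of_nonneg (norm_nonneg _) two_ne_zero, norm_add_sq_real, norm_smul,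
    norm_smul, real_inner_smul_left, real_inner_smul_right, hx, hu, hxu]
  simp only [Real.norm_eq_abs, mul_one, mul_zero, add_zero, sq_abs]
  exact Real.cos_sq_add_sin_sq t

lemma inner_fderiv_add_inner_eq_zero {X : E → E} {x v : E} (hX : DifferentiableAt ℝ X x)
    (htan : ∀ y, ‖y‖ = 1 → ⟪X y, y⟫ = 0) (hx : ‖x‖ = 1) (hv : ⟪x, v⟫ = 0) :
    ⟪fderiv ℝ X x v, x⟫ + ⟪X x, v⟫ = 0 := by
  suffices hunit : ∀ u, ‖u‖ = 1 → ⟪x, u⟫ = 0 → ⟪fderiv ℝ X x u, x⟫ + ⟪X x, u⟫ = 0 by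
    rcases eq_or_ne v 0 with rfl | hv0
    · simp
    have hnv : ‖v‖ ≠ 0 := norm_ne_zero_iff.mpr hv0
    have h := hunit (‖v‖⁻¹ • v) (by simp [norm_smul, hnv]) (by simp [inner_smul_right, hv])
    rw [map_smul, real_inner_smul_left, real_inner_smul_right, ← mul_add] at h
    exact (mul_eq_zero.mp h).resolve_left (inv_ne_zero hnv)
  intro u hu hxu
  set c : ℝ → E := fun t => Real.cos t • x + Real.sin t • u
  have hc0 : c 0 = x := by simp [c]
  have hc : HasDerivAt c u 0 := by
    simpa using
      ((Real.hasDerivAt_cos 0).smul_const x).fun_add ((Real.hasDerivAt_sin 0).smul_const u)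
  have hXc : HasDerivAt (fun t => X (c t)) (fderiv ℝ X x u) 0 := by
    have hXx : HasFDerivAt X (fderiv ℝ X x) (c 0) := by rw [hc0]; exact hX.hasFDerivAt
    exact hXx.comp_hasDerivAt 0 hc
  have hzero : (fun t => ⟪X (c t), c t⟫) = fun _ => 0 :=
    funext fun t => htan _ (norm_cos_smul_add_sin_smul hx hu hxu t)
  have h := hXc.inner ℝ hc
  rw [hzero, hc0] at h
  linarith [(hasDerivAt_const (0 : ℝ) (0 : ℝ)).unique h]

end Sphere

lemma norm_fderiv_rotF_sub_sq {X : E3 → E3} {x : E3} (hX : DifferentiableAt ℝ X x)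
    (htan : ∀ y : E3, ‖y‖ = 1 → ⟪X y, y⟫ = 0) (hx : ‖x‖ = 1) (i : Fin 3) :
    ‖fderiv ℝ X x (rotF i x) - cross3 (eb i) (X x)‖ ^ 2
      = ‖covDerivLinear X x (cross3 (eb i) x) - tproj x (cross3 (eb i) (X x))‖ ^ 2 := by
  have hnormal : ⟪x, fderiv ℝ X x (rotF i x) - cross3 (eb i) (X x)⟫ = 0 := by
    rw [inner_sub_right, real_inner_comm, inner_cross3_right_swap, rotF]
    linarith [inner_fderiv_add_inner_eq_zero hX htan hx (inner_cross3_self_right (eb i) x)]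
  rw [norm_sq_eq_norm_tproj_sq_add_inner_sq hx, hnormal, covDerivLinear_apply,
    tproj_of_inner_eq_zero (inner_cross3_self_right _ _), ← tprojLinear_apply, map_sub]
  simp [rotF]

theorem stmt8 (X : E3 → E3) (hX : Differentiable ℝ X)
    (htan : ∀ y : E3, ‖y‖ = 1 → ⟪X y, y⟫ = 0)
    (x : E3) (hx : ‖x‖ = 1) :
    ∑ i : Fin 3, ‖fderiv ℝ X x (rotF i x) - cross3 (eb i) (X x)‖ ^ 2
      = (∑ i : Fin 3, ‖covDV X x (eb i)‖ ^ 2) + ‖X x‖ ^ 2 := by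
  have hx0 : x ≠ 0 := by rintro rfl; simp at hx
  have hXx : ⟪x, X x⟫ = 0 := real_inner_comm x (X x) ▸ htan x hx
  have hPX : tprojLinear x (X x) = X x := tproj_of_inner_eq_zero hXx
  simp_rw [norm_fderiv_rotF_sub_sq (hX x) htan hx, covDV_eq_covDerivLinear (hX x) hx0 hXx,
    ← tprojLinear_apply, norm_sub_sq_real, Finset.sum_add_distrib, Finset.sum_sub_distrib,
    ← Finset.mul_sum, sum_norm_map_cross3_sq, sum_inner_map_cross3, hx, hXx, covDerivLinear_self,
    hPX, tprojLinear_apply, tproj_self, sum_norm_tproj_eb_sq hx]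
  simp only [one_pow, one_mul, norm_zero, inner_zero_right, zero_mul]
  ring
end
end
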